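/- Let γ > 0 and 0 < a < b < 1. Define Q(z) = e^{-1/(2z)}·√(z/(1−z)), K(z) = −(1/γ)·√((1−z)/z³)·(2z−1)·e^{1/(2z)} + (√(2πe)/γ)·erfi(√((1−z)/(2z))) with erfi(x) = (2/√π)∫_0^x e^{t²} dt, S(u,v) = ∫_u^v Q(z) dz, and R(u,v) = ∫_u^v Q(z)K(z) dz. Set T(y) = ( S(y,b)·R(a,y) − S(a,y)·R(y,b) ) / S(a,b) for y ∈ [a,b]. Then T(a) = T(b) = 0, and for every y ∈ (a,b), T is twice differentiable at y with −γ y·T'(y) + 2γ y³(1−y)·T''(y) = −1. -/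

import Mathlib

/-- The imaginary error function erfi(x) = (2/√π)∫_0^x e^{t²} dt. -/
noncomputable def erfi (x : ℝ) : ℝ :=
  (2 / Real.sqrt Real.pi) * ∫ t in (0 : ℝ)..x, Real.exp (t ^ 2)

/-- Optimal homodyne scale density Q(z) = e^{-1/(2z)}·√(z/(1−z)). -/
noncomputable def Qhom (z : ℝ) : ℝ :=
  Real.exp (-1 / (2 * z)) * Real.sqrt (z / (1 - z))

/-- Optimal homodyne function
K(z) = −(1/γ)√((1−z)/z³)(2z−1)e^{1/(2z)} + (√(2πe)/γ)erfi(√((1−z)/(2z))). -/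
noncomputable def Khom (γ z : ℝ) : ℝ :=
  -(1 / γ) * Real.sqrt ((1 - z) / z ^ 3) * (2 * z - 1) * Real.exp (1 / (2 * z))
    + (Real.sqrt (2 * Real.pi * Real.exp 1) / γ) *
        erfi (Real.sqrt ((1 - z) / (2 * z)))

/-- Optimal homodyne scale integral S(u,v) = ∫_u^v Q(z) dz. -/
noncomputable def Shom (u v : ℝ) : ℝ := ∫ z in u..v, Qhom z

/-- Optimal homodyne R(u,v) = ∫_u^v Q(z)K(z) dz. -/
noncomputable def Rhom (γ u v : ℝ) : ℝ := ∫ z in u..v, Qhom z * Khom γ z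

/-!
Additivity of the integrals turns `T` on `[a, b]` into `R(a, y) - C * S(a, y)` with
`C = R(a, b) / S(a, b)` (legitimate since `Q > 0` gives `S(a, b) ≠ 0`), so `T' = Q (K - C)` and
`T'' = Q' (K - C) + Q K'`. Hence `A T' + ½B² T'' = (K - C) (A Q + ½B² Q') + ½B² Q K'`: the
first bracket vanishes because `Q` is the scale density, `Q' = Q / (2 y² (1 - y))`, and the last
term is `-1` because `K' = -2 / (Q B²)`. Both derivative formulas are direct computations on `(0, 1)`
in which every square root is expressed through `r = √((1 - z) / z)`, with `r² = (1 - z) / z`.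
-/

open Real Set Filter Topology MeasureTheory intervalIntegral

section MeanExitTime

variable {Q K : ℝ → ℝ} {a b y : ℝ}

noncomputable def meanExitTime (Q K : ℝ → ℝ) (a b y : ℝ) : ℝ :=
  ((∫ z in y..b, Q z) * (∫ z in a..y, Q z * K z)
    - (∫ z in a..y, Q z) * (∫ z in y..b, Q z * K z)) / ∫ z in a..b, Q z

theorem meanExitTime_left : meanExitTime Q K a b a = 0 := by
  simp [meanExitTime]

theorem meanExitTime_right : meanExitTime Q K a b b = 0 := by
  simp [meanExitTime]

theorem meanExitTime_eq (hQ : IntervalIntegrable Q volume a b)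
    (hQK : IntervalIntegrable (fun z => Q z * K z) volume a b)
    (hS : ∫ z in a..b, Q z ≠ 0) (hy : y ∈ uIcc a b) :
    meanExitTime Q K a b y = (∫ z in a..y, Q z * K z)
      - (∫ z in a..b, Q z * K z) / (∫ z in a..b, Q z) * ∫ z in a..y, Q z := by
  have hQy := hQ.mono_set (uIcc_subset_uIcc_left hy)
  have hQKy := hQK.mono_set (uIcc_subset_uIcc_left hy)
  rw [meanExitTime, ← integral_interval_sub_left hQ hQy, ← integral_interval_sub_left hQK hQKy]
  field_simp
  ring

theorem hasDerivAt_integral_of_continuousOn {F : ℝ → ℝ} (hF : ContinuousOn F (Icc a b))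
    (hy : y ∈ Ioo a b) : HasDerivAt (fun w => ∫ z in a..w, F z) (F y) y :=
  integral_hasDerivAt_right
    ((hF.mono (Icc_subset_Icc_right hy.2.le)).intervalIntegrable_of_Icc hy.1.le)
    ((hF.mono Ioo_subset_Icc_self).stronglyMeasurableAtFilter isOpen_Ioo y hy)
    (hF.continuousAt (Icc_mem_nhds hy.1 hy.2))

theorem hasDerivAt_meanExitTime (hQ : ContinuousOn Q (Icc a b)) (hK : ContinuousOn K (Icc a b))
    (hS : ∫ z in a..b, Q z ≠ 0) (hy : y ∈ Ioo a b) :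
    HasDerivAt (meanExitTime Q K a b)
      (Q y * K y - (∫ z in a..b, Q z * K z) / (∫ z in a..b, Q z) * Q y) y := by
  have hQK : ContinuousOn (fun z => Q z * K z) (Icc a b) := hQ.mul hK
  have hab : a ≤ b := (hy.1.trans hy.2).le
  refine ((hasDerivAt_integral_of_continuousOn hQK hy).sub
    ((hasDerivAt_integral_of_continuousOn hQ hy).const_mul _)).congr_of_eventuallyEq ?_
  filter_upwards [Icc_mem_nhds hy.1 hy.2] with w hw
  exact meanExitTime_eq (hQ.intervalIntegrable_of_Icc hab) (hQK.intervalIntegrable_of_Icc hab) hS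
    (Icc_subset_uIcc hw)

theorem hasDerivAt_deriv_meanExitTime {q' k' : ℝ} (hQc : ContinuousOn Q (Icc a b))
    (hKc : ContinuousOn K (Icc a b)) (hQ : HasDerivAt Q q' y) (hK : HasDerivAt K k' y)
    (hS : ∫ z in a..b, Q z ≠ 0) (hy : y ∈ Ioo a b) :
    HasDerivAt (deriv (meanExitTime Q K a b))
      (q' * K y + Q y * k' - (∫ z in a..b, Q z * K z) / (∫ z in a..b, Q z) * q') y := by
  refine ((hQ.mul hK).sub (hQ.const_mul _)).congr_of_eventuallyEq ?_
  filter_upwards [Ioo_mem_nhds hy.1 hy.2] with w hw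
  exact (hasDerivAt_meanExitTime hQc hKc hS hw).deriv

theorem meanExitTime_generator {q' k' α δ : ℝ} (hQc : ContinuousOn Q (Icc a b))
    (hKc : ContinuousOn K (Icc a b)) (hQ : HasDerivAt Q q' y) (hK : HasDerivAt K k' y)
    (hS : ∫ z in a..b, Q z ≠ 0) (hy : y ∈ Ioo a b)
    (hscale : α * Q y + δ * q' = 0) (hspeed : δ * Q y * k' = -1) :
    ∃ t' t'' : ℝ, HasDerivAt (meanExitTime Q K a b) t' y ∧
      HasDerivAt (deriv (meanExitTime Q K a b)) t'' y ∧ α * t' + δ * t'' = -1 :=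
  ⟨_, _, hasDerivAt_meanExitTime hQc hKc hS hy, hasDerivAt_deriv_meanExitTime hQc hKc hQ hK hS hy,
    by
      linear_combination (K y - (∫ z in a..b, Q z * K z) / ∫ z in a..b, Q z) * hscale + hspeed⟩

end MeanExitTime

section Homodyne

variable {z : ℝ}

theorem hasDerivAt_erfi (x : ℝ) : HasDerivAt erfi (2 / √π * exp (x ^ 2)) x := by
  have hc : Continuous fun t : ℝ => exp (t ^ 2) := by fun_prop
  exact (integral_hasDerivAt_right (hc.intervalIntegrable 0 x)
    (hc.stronglyMeasurableAtFilter _ _) hc.continuousAt).const_mul (2 / √π)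

theorem hasDerivAt_sqrt_one_sub_div_self (h0 : 0 < z) (h1 : z < 1) :
    HasDerivAt (fun w => √((1 - w) / w)) (-1 / (2 * z ^ 2 * √((1 - z) / z))) z := by
  have hr : (1 - z) / z ≠ 0 := (div_pos (sub_pos.2 h1) h0).ne'
  have hdiv : HasDerivAt (fun w => (1 - w) / w) (-1 / z ^ 2) z := by
    refine (((hasDerivAt_id' z).const_sub 1).fun_div (hasDerivAt_id' z) h0.ne').congr_deriv ?_
    ring
  refine (hdiv.sqrt hr).congr_deriv ?_
  field_simp

theorem hasDerivAt_exp_div_two_mul (c : ℝ) (hz : z ≠ 0) :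
    HasDerivAt (fun w => exp (c / (2 * w))) (-c / (2 * z ^ 2) * exp (c / (2 * z))) z := by
  have h : HasDerivAt (fun w => c / (2 * w)) (-c / (2 * z ^ 2)) z := by
    refine ((hasDerivAt_const z c).fun_div ((hasDerivAt_id' z).const_mul 2)
      (mul_ne_zero two_ne_zero hz)).congr_deriv ?_
    field_simp
    ring
  simpa only [mul_comm] using h.exp

theorem Qhom_eq_exp_mul_inv_sqrt (z : ℝ) :
    Qhom z = exp (-1 / (2 * z)) * (√((1 - z) / z))⁻¹ := by
  rw [Qhom, ← sqrt_inv, inv_div]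

theorem Qhom_pos (h0 : 0 < z) (h1 : z < 1) : 0 < Qhom z :=
  mul_pos (exp_pos _) (sqrt_pos.2 (div_pos h0 (sub_pos.2 h1)))

theorem hasDerivAt_Qhom (h0 : 0 < z) (h1 : z < 1) :
    HasDerivAt Qhom (Qhom z / (2 * z ^ 2 * (1 - z))) z := by
  have hr : 0 < √((1 - z) / z) := sqrt_pos.2 (div_pos (sub_pos.2 h1) h0)
  have hr2 : √((1 - z) / z) ^ 2 = (1 - z) / z := sq_sqrt (div_pos (sub_pos.2 h1) h0).le
  have h := (hasDerivAt_exp_div_two_mul (-1) h0.ne').fun_mul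
    ((hasDerivAt_sqrt_one_sub_div_self h0 h1).fun_inv hr.ne')
  rw [funext Qhom_eq_exp_mul_inv_sqrt]
  refine h.congr_deriv ?_
  have h1' : 1 - z ≠ 0 := (sub_pos.2 h1).ne'
  field_simp
  rw [hr2]
  field_simp
  ring

theorem hasDerivAt_sqrt_mul_exp (h0 : 0 < z) (h1 : z < 1) :
    HasDerivAt (fun w => √((1 - w) / w ^ 3) * (2 * w - 1) * exp (1 / (2 * w)))
      (exp (1 / (2 * z)) * (1 - 2 * z ^ 2) / (2 * z ^ 4 * √((1 - z) / z))) z := by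
  have hr2 : √((1 - z) / z) ^ 2 = (1 - z) / z := sq_sqrt (div_pos (sub_pos.2 h1) h0).le
  have hsqrt : √((1 - z) / z ^ 3) = √((1 - z) / z) / z := by
    rw [show (1 - z) / z ^ 3 = (1 - z) / z / z ^ 2 by ring, sqrt_div' _ (sq_nonneg z),
      sqrt_sq h0.le]
  have hdiv : HasDerivAt (fun w => (1 - w) / w ^ 3) ((2 * z - 3) / z ^ 4) z := by
    refine (((hasDerivAt_id' z).const_sub 1).fun_div (hasDerivAt_pow 3 z)
      (pow_ne_zero 3 h0.ne')).congr_deriv ?_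
    field_simp
    ring
  have hlin : HasDerivAt (fun w => 2 * w - 1) 2 z := by
    simpa using ((hasDerivAt_id' z).const_mul 2).sub_const 1
  have h := ((hdiv.sqrt (div_pos (sub_pos.2 h1) (pow_pos h0 3)).ne').fun_mul hlin).fun_mul
    (hasDerivAt_exp_div_two_mul 1 h0.ne')
  refine h.congr_deriv ?_
  rw [hsqrt]
  field_simp
  rw [hr2]
  field_simp
  ring

theorem hasDerivAt_erfi_sqrt (h0 : 0 < z) (h1 : z < 1) :
    HasDerivAt (fun w => √(2 * π * exp 1) * erfi √((1 - w) / (2 * w)))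
      (-exp (1 / (2 * z)) / (z ^ 2 * √((1 - z) / z))) z := by
  have hs2 : √2 ^ 2 = 2 := sq_sqrt zero_le_two
  have hc : √(2 * π * exp 1) = √2 * √π * exp (1 / 2) := by
    rw [sqrt_mul (by positivity), sqrt_mul zero_le_two, ← exp_half]
  have hsqrt : √((1 - z) / (2 * z)) = √((1 - z) / z) / √2 := by
    rw [show (1 - z) / (2 * z) = (1 - z) / z / 2 by ring, sqrt_div' _ zero_le_two]
  have hexp : exp ((1 - z) / (2 * z)) = exp (1 / (2 * z)) * exp (-1 / 2) := by
    rw [← exp_add]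
    congr 1
    field_simp
    ring
  have hdiv : HasDerivAt (fun w => (1 - w) / (2 * w)) (-1 / (2 * z ^ 2)) z := by
    refine (((hasDerivAt_id' z).const_sub 1).fun_div ((hasDerivAt_id' z).const_mul 2)
      (mul_ne_zero two_ne_zero h0.ne')).congr_deriv ?_
    field_simp
    ring
  have hpos : 0 < (1 - z) / (2 * z) := div_pos (sub_pos.2 h1) (mul_pos two_pos h0)
  have h := ((hasDerivAt_erfi _).comp z (hdiv.sqrt hpos.ne')).const_mul √(2 * π * exp 1)
  refine h.congr_deriv ?_
  rw [sq_sqrt hpos.le, hexp, hc, hsqrt]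
  field_simp
  rw [hs2, mul_assoc, ← exp_add]
  norm_num

theorem hasDerivAt_Khom (γ : ℝ) (h0 : 0 < z) (h1 : z < 1) :
    HasDerivAt (Khom γ) (-1 / (2 * γ * z ^ 3 * (1 - z) * Qhom z)) z := by
  have hK : Khom γ = fun w => γ⁻¹ * (√(2 * π * exp 1) * erfi √((1 - w) / (2 * w))
      - √((1 - w) / w ^ 3) * (2 * w - 1) * exp (1 / (2 * w))) :=
    funext fun w => by rw [Khom]; ring
  rw [hK, show -1 / (2 * γ * z ^ 3 * (1 - z) * Qhom z)
    = γ⁻¹ * (-1 / (2 * z ^ 3 * (1 - z) * Qhom z)) by generalize 1 - z = u; ring]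
  refine (((hasDerivAt_erfi_sqrt h0 h1).sub
    (hasDerivAt_sqrt_mul_exp h0 h1)).const_mul γ⁻¹).congr_deriv ?_
  congr 1
  have hr : 0 < √((1 - z) / z) := sqrt_pos.2 (div_pos (sub_pos.2 h1) h0)
  have hr2 : √((1 - z) / z) ^ 2 = (1 - z) / z := sq_sqrt (div_pos (sub_pos.2 h1) h0).le
  have h1' : 1 - z ≠ 0 := (sub_pos.2 h1).ne'
  have hE : exp (1 / (2 * z)) * exp (-(1 / (2 * z))) = 1 := by
    rw [← exp_add, add_neg_cancel, exp_zero]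
  rw [Qhom_eq_exp_mul_inv_sqrt]
  field_simp
  rw [hr2]
  field_simp
  linear_combination -hE

end Homodyne

/-- The mean first exit time of (a,b) under optimal homodyne detection,
T(y) = (S(y,b)R(a,y) − S(a,y)R(y,b))/S(a,b), vanishes at a and b and solves
−γy T'(y) + 2γy³(1−y) T''(y) = −1 on (a,b). -/
theorem hom_mean_exit_time (γ a b : ℝ) (hγ : 0 < γ) (ha : 0 < a) (hab : a < b)
    (hb : b < 1) :
    let T : ℝ → ℝ := fun y =>
      (Shom y b * Rhom γ a y - Shom a y * Rhom γ y b) / Shom a b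
    T a = 0 ∧ T b = 0 ∧
    ∀ y ∈ Set.Ioo a b, ∃ t' t'' : ℝ,
      HasDerivAt T t' y ∧ HasDerivAt (deriv T) t'' y ∧
      -γ * y * t' + 2 * γ * y ^ 3 * (1 - y) * t'' = -1 := by
  intro T
  have hT : T = meanExitTime Qhom (Khom γ) a b := rfl
  have h01 : ∀ y ∈ Icc a b, 0 < y ∧ y < 1 := fun y hy =>
    ⟨ha.trans_le hy.1, hy.2.trans_lt hb⟩
  have hQc : ContinuousOn Qhom (Icc a b) := fun y hy =>
    (hasDerivAt_Qhom (h01 y hy).1 (h01 y hy).2).continuousAt.continuousWithinAt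
  have hKc : ContinuousOn (Khom γ) (Icc a b) := fun y hy =>
    (hasDerivAt_Khom γ (h01 y hy).1 (h01 y hy).2).continuousAt.continuousWithinAt
  have hS : ∫ z in a..b, Qhom z ≠ 0 :=
    (intervalIntegral_pos_of_pos_on (hQc.intervalIntegrable_of_Icc hab.le)
      (fun y hy => (h01 y (Ioo_subset_Icc_self hy)).elim Qhom_pos) hab).ne'
  refine hT ▸ ⟨meanExitTime_left, meanExitTime_right, fun y hy => ?_⟩
  obtain ⟨hy0, hy1⟩ := h01 y (Ioo_subset_Icc_self hy)
  have hQy : 0 < Qhom y := Qhom_pos hy0 hy1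
  have hy1' : 1 - y ≠ 0 := (sub_pos.2 hy1).ne'
  exact meanExitTime_generator (α := -γ * y) (δ := 2 * γ * y ^ 3 * (1 - y))
    hQc hKc (hasDerivAt_Qhom hy0 hy1) (hasDerivAt_Khom γ hy0 hy1) hS hy
    (by field_simp; ring) (by field_simp)
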